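/- Let X be a finite set with |X| = r where r ≥ 3, and fix x ∈ X. Define e₀ = (r/(r−1))·(E₀ + E₀* − E₀E₀* − E₀*E₀). Then e₀E₀* = E₀*e₀ = E₀* and e₀E₀ = E₀e₀ = E₀. -/
import Mathlib


/-- The all-ones matrix `J` on index set `X`. -/
def Jmat (X : Type*) : Matrix X X ℂ := Matrix.of fun _ _ => 1

/-- The 0-th primitive idempotent `E₀ = r⁻¹ J` of the complete graph `K_r`. -/
noncomputable def E0 (X : Type*) (r : ℕ) : Matrix X X ℂ := (r : ℂ)⁻¹ • Jmat X

/-- The 0-th dual idempotent `E₀*` with respect to the base vertex `x`. -/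
def E0s (X : Type*) [DecidableEq X] (x : X) : Matrix X X ℂ :=
  Matrix.diagonal fun y => if y = x then 1 else 0

/-- `e₀ = (r/(r−1))·(E₀ + E₀* − E₀E₀* − E₀*E₀)`. -/
noncomputable def e0 (X : Type*) [Fintype X] [DecidableEq X] (r : ℕ) (x : X) : Matrix X X ℂ :=
  ((r : ℂ) / ((r : ℂ) - 1)) • (E0 X r + E0s X x - E0 X r * E0s X x - E0s X x * E0 X r)

section Aux

variable {X : Type*} [Fintype X] [DecidableEq X] {r : ℕ} {x : X}

lemma Lss : E0s X x * E0s X x = E0s X x := by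
  ext y z
  simp [E0s, Matrix.mul_apply, Matrix.diagonal_apply]
  by_cases h : y = z <;> by_cases h2 : y = x <;> simp_all

lemma L00 (hr0 : (r:ℂ) ≠ 0) (hcard : Fintype.card X = r) : E0 X r * E0 X r = E0 X r := by
  ext y z
  simp [E0, Jmat, Matrix.mul_apply, hcard]
  field_simp

lemma Ls0s : E0s X x * E0 X r * E0s X x = (r:ℂ)⁻¹ • E0s X x := by
  ext y z
  simp [E0, E0s, Jmat, Matrix.mul_apply, Matrix.diagonal_apply]
  by_cases h2 : y = x <;> by_cases h3 : z = x <;> by_cases h : y = z <;> simp_all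

lemma L0s0 (x : X) : E0 X r * E0s X x * E0 X r = (r:ℂ)⁻¹ • E0 X r := by
  ext y z
  simp [E0, E0s, Jmat, Matrix.mul_apply, Matrix.diagonal_apply]

end Aux

theorem stmt8 (X : Type*) [Fintype X] [DecidableEq X] (r : ℕ) (hr : 3 ≤ r)
    (hcard : Fintype.card X = r) (x : X) :
    e0 X r x * E0s X x = E0s X x ∧ E0s X x * e0 X r x = E0s X x ∧
    e0 X r x * E0 X r = E0 X r ∧ E0 X r * e0 X r x = E0 X r := by
  have hr0 : (r:ℂ) ≠ 0 := by
    exact_mod_cast Nat.cast_ne_zero.mpr (by omega)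
  have hr1 : (r:ℂ) - 1 ≠ 0 := by
    intro h
    have : (r:ℂ) = 1 := by linear_combination h
    have : r = 1 := by exact_mod_cast this
    omega
  have key : (r:ℂ)/((r:ℂ)-1) * (1 - (r:ℂ)⁻¹) = 1 := by field_simp
  refine ⟨?_, ?_, ?_, ?_⟩
  · have h : (E0 X r + E0s X x - E0 X r * E0s X x - E0s X x * E0 X r) * E0s X x
        = (1 - (r:ℂ)⁻¹) • E0s X x := by
      rw [sub_mul, sub_mul, add_mul, mul_assoc, Lss, Ls0s]
      module
    rw [e0, smul_mul_assoc, h, smul_smul, key, one_smul]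
  · have h : E0s X x * (E0 X r + E0s X x - E0 X r * E0s X x - E0s X x * E0 X r)
        = (1 - (r:ℂ)⁻¹) • E0s X x := by
      rw [mul_sub, mul_sub, mul_add, ← mul_assoc, ← mul_assoc, Lss, Ls0s]
      module
    rw [e0, mul_smul_comm, h, smul_smul, key, one_smul]
  · have h : (E0 X r + E0s X x - E0 X r * E0s X x - E0s X x * E0 X r) * E0 X r
        = (1 - (r:ℂ)⁻¹) • E0 X r := by
      rw [sub_mul, sub_mul, add_mul, L0s0 x, mul_assoc, L00 hr0 hcard]
      module
    rw [e0, smul_mul_assoc, h, smul_smul, key, one_smul]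
  · have h : E0 X r * (E0 X r + E0s X x - E0 X r * E0s X x - E0s X x * E0 X r)
        = (1 - (r:ℂ)⁻¹) • E0 X r := by
      rw [mul_sub, mul_sub, mul_add, ← mul_assoc, ← mul_assoc, L00 hr0 hcard, L0s0 x]
      module
    rw [e0, mul_smul_comm, h, smul_smul, key, one_smul]
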